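/- arXiv:1705.01640 — 4 statements merged into one kernel-verified Lean document; each statement's English description precedes it below -/
import Mathlib

section
/- The function ξ(a,b) := (1/2)·log(1 + (√Q − a)²/(1 + b − a²)) is jointly convex on the region {(a,b) : a² ≤ b, 1 + b − a² > 0}, for any fixed Q > 0. -/
/-!
With `v = √Q - a` and `D = 1 + b - a²`, one has `ξ = -½ log (1 - v² / (D + v²))`. The denominator
`D + v² = 1 + Q + b - 2√Q a` is affine in `(a, b)`, so `v² / (D + v²)` is the convex
quadratic-over-linear function `(x, y) ↦ x² / y` composed with an affine map; it takes values
in `t < 1`, where `t ↦ -log (1 - t)` is convex and increasing.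
-/

open Set Real

section

variable {𝕜 E β γ : Type*} [Semiring 𝕜] [PartialOrder 𝕜] [AddCommMonoid E] [SMul 𝕜 E]
  [AddCommMonoid β] [PartialOrder β] [SMul 𝕜 β] [AddCommMonoid γ] [PartialOrder γ] [SMul 𝕜 γ]

theorem ConvexOn.comp_of_mapsTo {s : Set E} {t : Set β} {f : E → β} {g : β → γ}
    (hg : ConvexOn 𝕜 t g) (hf : ConvexOn 𝕜 s f) (hg' : MonotoneOn g t) (hst : MapsTo f s t) :
    ConvexOn 𝕜 s (g ∘ f) :=
  ⟨hf.1, fun _ hx _ hy _ _ ha hb hab =>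
    (hg' (hst (hf.1 hx hy ha hb hab)) (hg.1 (hst hx) (hst hy) ha hb hab)
      (hf.2 hx hy ha hb hab)).trans (hg.2 (hst hx) (hst hy) ha hb hab)⟩

end

theorem convexOn_sq_div {𝕜 : Type*} [Field 𝕜] [LinearOrder 𝕜] [IsStrictOrderedRing 𝕜] :
    ConvexOn 𝕜 {p : 𝕜 × 𝕜 | 0 < p.2} fun p => p.1 ^ 2 / p.2 := by
  have hS : Convex 𝕜 {p : 𝕜 × 𝕜 | 0 < p.2} :=
    convex_halfSpace_gt (LinearMap.snd 𝕜 𝕜 𝕜).isLinear 0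
  refine ⟨hS, fun x hx y hy a b ha hb hab => ?_⟩
  have hxy : 0 < a * x.2 + b * y.2 := hS hx hy ha hb hab
  have hx2 : 0 < x.2 := hx
  have hy2 : 0 < y.2 := hy
  simp only [Prod.fst_add, Prod.snd_add, Prod.smul_fst, Prod.smul_snd, smul_eq_mul]
  -- Lagrange's identity, the equality form of the two-term Cauchy–Schwarz inequality
  have lagrange : (a * (x.1 ^ 2 / x.2) + b * (y.1 ^ 2 / y.2)) * (a * x.2 + b * y.2)
      - (a * x.1 + b * y.1) ^ 2 = a * b * x.2 * y.2 * (x.1 / x.2 - y.1 / y.2) ^ 2 := by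
    field_simp
    ring
  have : 0 ≤ a * b * x.2 * y.2 * (x.1 / x.2 - y.1 / y.2) ^ 2 := by positivity
  rw [div_le_iff₀ hxy]
  linarith

theorem convexOn_neg_log_one_sub : ConvexOn ℝ (Iio 1) fun t => -log (1 - t) := by
  have h := strictConcaveOn_log_Ioi.concaveOn.neg.comp_affineMap
    (AffineMap.const ℝ ℝ (1 : ℝ) - AffineMap.id ℝ ℝ)
  have hpre : (AffineMap.const ℝ ℝ (1 : ℝ) - AffineMap.id ℝ ℝ) ⁻¹' Ioi 0 = Iio 1 := by
    ext t
    simp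
  rwa [hpre] at h

theorem monotoneOn_neg_log_one_sub : MonotoneOn (fun t => -log (1 - t)) (Iio 1) :=
  fun _ _ _ ht hst => neg_le_neg (log_le_log (sub_pos.2 ht) (sub_le_sub_left hst 1))

theorem log_one_add_sq_div {D : ℝ} (hD : 0 < D) (v : ℝ) :
    log (1 + v ^ 2 / D) = -log (1 - v ^ 2 / (D + v ^ 2)) := by
  have hN : 0 < D + v ^ 2 := by positivity
  have h : 1 - v ^ 2 / (D + v ^ 2) = (1 + v ^ 2 / D)⁻¹ := by
    field_simp
    ring
  rw [h, log_inv, neg_neg]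

theorem convexOn_sq_div_one_add_sub_sq_add_sq (c : ℝ) :
    ConvexOn ℝ {p : ℝ × ℝ | 0 < 1 + p.2 - p.1 ^ 2 + (c - p.1) ^ 2}
      fun p => (c - p.1) ^ 2 / (1 + p.2 - p.1 ^ 2 + (c - p.1) ^ 2) := by
  let A : ℝ × ℝ →ᵃ[ℝ] ℝ × ℝ :=
    (AffineMap.const ℝ _ c - (LinearMap.fst ℝ ℝ ℝ).toAffineMap).prod
      (AffineMap.const ℝ _ (1 + c ^ 2) + (LinearMap.snd ℝ ℝ ℝ).toAffineMap
        - (2 * c) • (LinearMap.fst ℝ ℝ ℝ).toAffineMap)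
  have hA (p : ℝ × ℝ) : A p = (c - p.1, 1 + p.2 - p.1 ^ 2 + (c - p.1) ^ 2) := by
    simp [A]
    ring
  have h := convexOn_sq_div.comp_affineMap A
  simp only [preimage_ofPred_eq, Function.comp_def, hA] at h
  exact h

theorem xi_convexOn_general (Q : ℝ) :
    ConvexOn ℝ {p : ℝ × ℝ | p.1 ^ 2 ≤ p.2 ∧ 0 < 1 + p.2 - p.1 ^ 2}
      (fun p : ℝ × ℝ =>
        (1 / 2) * Real.log (1 + (Real.sqrt Q - p.1) ^ 2 / (1 + p.2 - p.1 ^ 2))) := by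
  set S := {p : ℝ × ℝ | p.1 ^ 2 ≤ p.2 ∧ 0 < 1 + p.2 - p.1 ^ 2}
  have hS : Convex ℝ S := by
    have hS_epigraph : S = {p : ℝ × ℝ | p.1 ∈ univ ∧ p.1 ^ 2 ≤ p.2} := by
      ext p
      exact ⟨fun h => ⟨trivial, h.1⟩, fun h => ⟨h.2, by linarith [h.2]⟩⟩
    rw [hS_epigraph]
    exact (even_two.convexOn_pow (𝕜 := ℝ)).convex_epigraph
  have hg := (convexOn_sq_div_one_add_sub_sq_add_sq √Q).subset
    (fun p hp => add_pos_of_pos_of_nonneg hp.2 (sq_nonneg _)) hS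
  have hg_lt_one : MapsTo (fun p : ℝ × ℝ => (√Q - p.1) ^ 2 / (1 + p.2 - p.1 ^ 2 + (√Q - p.1) ^ 2))
      S (Iio 1) := fun p hp => by
    have hD : 0 < 1 + p.2 - p.1 ^ 2 := hp.2
    rw [mem_Iio, div_lt_one (by positivity)]
    linarith
  refine ((convexOn_neg_log_one_sub.comp_of_mapsTo hg monotoneOn_neg_log_one_sub
    hg_lt_one).smul (by norm_num : (0 : ℝ) ≤ 1 / 2)).congr fun p hp => ?_
  simp only [Function.comp_apply, smul_eq_mul, log_one_add_sq_div hp.2]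

/-- The function `ξ(a,b) = (1/2) log(1 + (√Q − a)² / (1 + b − a²))` is jointly
convex on the region `{(a,b) : a² ≤ b, 1 + b − a² > 0}`, for any fixed `Q > 0`. -/
theorem xi_convexOn (Q : ℝ) (hQ : 0 < Q) :
    ConvexOn ℝ {p : ℝ × ℝ | p.1 ^ 2 ≤ p.2 ∧ 0 < 1 + p.2 - p.1 ^ 2}
      (fun p : ℝ × ℝ =>
        (1 / 2) * Real.log (1 + (Real.sqrt Q - p.1) ^ 2 / (1 + p.2 - p.1 ^ 2))) :=
  xi_convexOn_general Q
end

section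
/- The determinant of the Hessian of ξ(a,b) = (1/2)·log(1 + (√Q − a)²/(1 + b − a²)) equals (√Q − a)⁴ / [(1 + b − a²)·((√Q − a)² + 1 + b − a²)]² (up to the stated denominator structure), and is nonnegative whenever a² ≤ b. -/
/-!
On `a² < b` write `ξ = (log N − log D) / 2` with `D = 1 + b − a²` and `N = (√Q − a)² + D`.
Both are affine in `b`, and `N = 1 + b + (√Q)² − 2√Q a` is affine in `a` as well, so all
second partials of `ξ` are explicit rational functions of `√Q`, `a`, `N`, `D`; the determinant
then collapses to `(√Q − a)⁴ / (2 D³ N²)`, which is nonnegative since `D > 0`.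
-/

/-- The function `ξ(a,b) = (1/2) log(1 + (√Q − a)² / (1 + b − a²))`. -/
noncomputable def xi (Q a b : ℝ) : ℝ :=
  (1 / 2) * Real.log (1 + (Real.sqrt Q - a) ^ 2 / (1 + b - a ^ 2))

open Real Filter Topology

noncomputable def xiNum (Q a b : ℝ) : ℝ := (√Q - a) ^ 2 + 1 + b - a ^ 2

def xiDen (a b : ℝ) : ℝ := 1 + b - a ^ 2

theorem hessian_det_identity {s a N D : ℝ} (hD : D ≠ 0) (hN : N ≠ 0) (hND : N = (s - a) ^ 2 + D) :
    (-2 * s ^ 2 / N ^ 2 + (D + 2 * a ^ 2) / D ^ 2) * ((1 / D ^ 2 - 1 / N ^ 2) / 2)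
        - (s / N ^ 2 - a / D ^ 2) * (s / N ^ 2 - a / D ^ 2)
      = (s - a) ^ 4 / (2 * D ^ 3 * N ^ 2) := by
  field_simp
  subst hND
  ring

theorem xiNum_eq_sq_add_xiDen (Q a b : ℝ) : xiNum Q a b = (√Q - a) ^ 2 + xiDen a b := by
  unfold xiNum xiDen
  ring

section

variable {Q a b : ℝ}

theorem xiDen_pos (h : a ^ 2 < b) : 0 < xiDen a b := by
  unfold xiDen
  linarith

theorem xiNum_pos (h : a ^ 2 < b) : 0 < xiNum Q a b := by
  rw [xiNum_eq_sq_add_xiDen]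
  have := xiDen_pos h
  positivity

theorem hasDerivAt_xiNum_fst : HasDerivAt (fun x => xiNum Q x b) (-2 * √Q) a := by
  have : HasDerivAt (fun x => (1 + b + √Q ^ 2) - 2 * √Q * x) (-2 * √Q) a := by
    simpa using ((hasDerivAt_id a).const_mul (2 * √Q)).const_sub (1 + b + √Q ^ 2)
  convert this using 2 with x
  unfold xiNum
  ring

theorem hasDerivAt_xiNum_snd : HasDerivAt (fun y => xiNum Q a y) 1 b :=
  ((hasDerivAt_id b).const_add _).sub_const _

theorem hasDerivAt_xiDen_fst : HasDerivAt (fun x => xiDen x b) (-2 * a) a := by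
  unfold xiDen
  simpa using (hasDerivAt_pow 2 a).const_sub (1 + b)

theorem hasDerivAt_xiDen_snd : HasDerivAt (fun y => xiDen a y) 1 b :=
  ((hasDerivAt_id b).const_add _).sub_const _

theorem xi_eq_of_sq_lt (h : a ^ 2 < b) : xi Q a b = (log (xiNum Q a b) - log (xiDen a b)) / 2 := by
  have hD := xiDen_pos h
  have hquot : 1 + (√Q - a) ^ 2 / xiDen a b = xiNum Q a b / xiDen a b := by
    rw [xiNum_eq_sq_add_xiDen]
    field_simp
    ring
  rw [xi, ← xiDen, hquot, log_div (xiNum_pos h).ne' hD.ne']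
  ring

theorem eventually_sq_lt (h : a ^ 2 < b) : ∀ᶠ x in 𝓝 a, x ^ 2 < b :=
  (continuous_pow 2).continuousAt.eventually_lt continuousAt_const h

theorem hasDerivAt_xi_fst (h : a ^ 2 < b) :
    HasDerivAt (fun x => xi Q x b) (-√Q / xiNum Q a b + a / xiDen a b) a := by
  have hlog := ((hasDerivAt_xiNum_fst (Q := Q) (b := b)).log (xiNum_pos h).ne').sub
    ((hasDerivAt_xiDen_fst (b := b)).log (xiDen_pos h).ne')
  refine ((hlog.div_const 2).congr_of_eventuallyEq
    ((eventually_sq_lt h).mono fun x hx => xi_eq_of_sq_lt hx)).congr_deriv ?_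
  ring

theorem hasDerivAt_xi_snd (h : a ^ 2 < b) :
    HasDerivAt (fun y => xi Q a y) ((1 / xiNum Q a b - 1 / xiDen a b) / 2) b := by
  have hlog := ((hasDerivAt_xiNum_snd (Q := Q) (a := a)).log (xiNum_pos h).ne').sub
    ((hasDerivAt_xiDen_snd (a := a)).log (xiDen_pos h).ne')
  exact (hlog.div_const 2).congr_of_eventuallyEq
    ((eventually_gt_nhds h).mono fun y hy => xi_eq_of_sq_lt hy)

theorem deriv_deriv_xi_fst_fst (h : a ^ 2 < b) :
    deriv (fun x => deriv (fun x' => xi Q x' b) x) a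
      = -2 * √Q ^ 2 / xiNum Q a b ^ 2 + (xiDen a b + 2 * a ^ 2) / xiDen a b ^ 2 := by
  have hfst : (fun x => deriv (fun x' => xi Q x' b) x) =ᶠ[𝓝 a]
      fun x => -√Q / xiNum Q x b + x / xiDen x b :=
    (eventually_sq_lt h).mono fun x hx => (hasDerivAt_xi_fst hx).deriv
  rw [hfst.deriv_eq]
  refine (((hasDerivAt_const a (-√Q)).div hasDerivAt_xiNum_fst (xiNum_pos h).ne').add
    ((hasDerivAt_id' a).div hasDerivAt_xiDen_fst (xiDen_pos h).ne')).deriv.trans ?_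
  ring

theorem deriv_deriv_xi_snd_snd (h : a ^ 2 < b) :
    deriv (fun y => deriv (fun y' => xi Q a y') y) b
      = (1 / xiDen a b ^ 2 - 1 / xiNum Q a b ^ 2) / 2 := by
  have hsnd : (fun y => deriv (fun y' => xi Q a y') y) =ᶠ[𝓝 b]
      fun y => (1 / xiNum Q a y - 1 / xiDen a y) / 2 :=
    (eventually_gt_nhds h).mono fun y hy => (hasDerivAt_xi_snd hy).deriv
  rw [hsnd.deriv_eq]
  refine ((((hasDerivAt_const b 1).div hasDerivAt_xiNum_snd (xiNum_pos h).ne').sub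
    ((hasDerivAt_const b 1).div hasDerivAt_xiDen_snd (xiDen_pos h).ne')).div_const 2).deriv.trans ?_
  ring

theorem deriv_deriv_xi_snd_fst (h : a ^ 2 < b) :
    deriv (fun y => deriv (fun x => xi Q x y) a) b
      = √Q / xiNum Q a b ^ 2 - a / xiDen a b ^ 2 := by
  have hfst : (fun y => deriv (fun x => xi Q x y) a) =ᶠ[𝓝 b]
      fun y => -√Q / xiNum Q a y + a / xiDen a y :=
    (eventually_gt_nhds h).mono fun y hy => (hasDerivAt_xi_fst hy).deriv
  rw [hfst.deriv_eq]
  refine (((hasDerivAt_const b (-√Q)).div hasDerivAt_xiNum_snd (xiNum_pos h).ne').add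
    ((hasDerivAt_const b a).div hasDerivAt_xiDen_snd (xiDen_pos h).ne')).deriv.trans ?_
  ring

theorem deriv_deriv_xi_fst_snd (h : a ^ 2 < b) :
    deriv (fun x => deriv (fun y => xi Q x y) b) a
      = √Q / xiNum Q a b ^ 2 - a / xiDen a b ^ 2 := by
  have hsnd : (fun x => deriv (fun y => xi Q x y) b) =ᶠ[𝓝 a]
      fun x => (1 / xiNum Q x b - 1 / xiDen x b) / 2 :=
    (eventually_sq_lt h).mono fun x hx => (hasDerivAt_xi_snd hx).deriv
  rw [hsnd.deriv_eq]
  refine ((((hasDerivAt_const a 1).div hasDerivAt_xiNum_fst (xiNum_pos h).ne').sub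
    ((hasDerivAt_const a 1).div hasDerivAt_xiDen_fst (xiDen_pos h).ne')).div_const 2).deriv.trans ?_
  ring

end

theorem xi_hessian_det_general (Q : ℝ) (a b : ℝ) (hab : a ^ 2 < b) :
    deriv (fun x => deriv (fun x' => xi Q x' b) x) a
        * deriv (fun y => deriv (fun y' => xi Q a y') y) b
      - deriv (fun y => deriv (fun x => xi Q x y) a) b
        * deriv (fun x => deriv (fun y => xi Q x y) b) a
      = (Real.sqrt Q - a) ^ 4
          / (2 * (1 + b - a ^ 2) ^ 3 * ((Real.sqrt Q - a) ^ 2 + 1 + b - a ^ 2) ^ 2) ∧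
    0 ≤ (Real.sqrt Q - a) ^ 4
          / (2 * (1 + b - a ^ 2) ^ 3 * ((Real.sqrt Q - a) ^ 2 + 1 + b - a ^ 2) ^ 2) := by
  have hD := xiDen_pos hab
  refine ⟨?_, div_nonneg (by positivity) (by unfold xiDen at hD; positivity)⟩
  rw [deriv_deriv_xi_fst_fst hab, deriv_deriv_xi_snd_snd hab, deriv_deriv_xi_snd_fst hab,
    deriv_deriv_xi_fst_snd hab]
  exact hessian_det_identity hD.ne' (xiNum_pos hab).ne' (xiNum_eq_sq_add_xiDen Q a b)

/-- On the domain `a² < b`, the determinant of the Hessian of `ξ` equals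
`(√Q − a)⁴ / (2 (1 + b − a²)³ ((√Q − a)² + 1 + b − a²)²)` (the stated denominator structure),
and this quantity is nonnegative whenever `a² ≤ b`. -/
theorem xi_hessian_det (Q : ℝ) (hQ : 0 < Q) (a b : ℝ) (hab : a ^ 2 < b) :
    deriv (fun x => deriv (fun x' => xi Q x' b) x) a
        * deriv (fun y => deriv (fun y' => xi Q a y') y) b
      - deriv (fun y => deriv (fun x => xi Q x y) a) b
        * deriv (fun x => deriv (fun y => xi Q x y) b) a
      = (Real.sqrt Q - a) ^ 4
          / (2 * (1 + b - a ^ 2) ^ 3 * ((Real.sqrt Q - a) ^ 2 + 1 + b - a ^ 2) ^ 2) ∧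
    0 ≤ (Real.sqrt Q - a) ^ 4
          / (2 * (1 + b - a ^ 2) ^ 3 * ((Real.sqrt Q - a) ^ 2 + 1 + b - a ^ 2) ^ 2) :=
  xi_hessian_det_general Q a b hab
end

section
/- For every δ ∈ [0,1], the function ρ ↦ (1/2)·[log((1+P₂+P₁+Q+2ρ√(P₁Q))/(δ+P₁+Q+2ρ√(P₁Q))) + log((δ+(1−ρ²)P₁)/(1+P₂))] is concave on [−1, 0]. -/
/-!
Up to the constant `-log (1 + P₂)`, twice the objective is `log A + (log g - log B)` with
`A, B` affine and `g ρ = δ + (1 - ρ²) P₁` concave, so `log A` is concave as the logarithm of a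
positive concave function. For the other part put `a = √P₁`, `b = √Q`: then
`B = g + (b + a ρ)²`, and `(log g - log B)'' ≤ 0` becomes the polynomial inequality
`2 b² g² ≤ (g + 2 (a ρ)²) (g + (b + a ρ)²)²`, which holds for every `g ≥ 0`.
-/

open Real Set

theorem ConcaveOn.log {s : Set ℝ} {f : ℝ → ℝ} (hf : ConcaveOn ℝ s f)
    (hpos : ∀ x ∈ s, 0 < f x) :
    ConcaveOn ℝ s (fun x => Real.log (f x)) :=
  ⟨hf.1, fun x hx y hy _ _ ha hb hab =>
    (strictConcaveOn_log_Ioi.concaveOn.2 (hpos x hx) (hpos y hy) ha hb hab).trans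
      (log_le_log (convex_Ioi (0 : ℝ) (hpos x hx) (hpos y hy) ha hb hab)
        (hf.2 hx hy ha hb hab))⟩

theorem concaveOn_const_add_mul {s : Set ℝ} (hs : Convex ℝ s) (c d : ℝ) :
    ConcaveOn ℝ s (fun x => c + d * x) :=
  ⟨hs, fun x _ y _ a b _ _ hab =>
    le_of_eq (by simp only [smul_eq_mul]; linear_combination c * hab)⟩

theorem two_mul_sq_mul_sq_le {g : ℝ} (hg : 0 ≤ g) (b u : ℝ) :
    2 * b ^ 2 * g ^ 2 ≤ (g + 2 * u ^ 2) * (g + (b + u) ^ 2) ^ 2 := by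
  have hsos : (g + 2 * u ^ 2) * (g + (b + u) ^ 2) ^ 2 - 2 * b ^ 2 * g ^ 2
      = g * (g + 2 * u * (b + u)) ^ 2 + (g + 2 * u ^ 2) * (b + u) ^ 4 := by ring
  have : 0 ≤ g * (g + 2 * u * (b + u)) ^ 2 + (g + 2 * u ^ 2) * (b + u) ^ 4 := by positivity
  linarith

theorem concaveOn_log_quadratic_sub_log_affine {D : Set ℝ} (hD : Convex ℝ D) (a b δ : ℝ)
    (hg : ∀ x ∈ D, 0 < δ + (1 - x ^ 2) * a ^ 2) :
    ConcaveOn ℝ D (fun x =>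
      log (δ + (1 - x ^ 2) * a ^ 2) - log (δ + a ^ 2 + b ^ 2 + 2 * x * (a * b))) := by
  set g : ℝ → ℝ := fun x => δ + (1 - x ^ 2) * a ^ 2 with g_def
  set B : ℝ → ℝ := fun x => δ + a ^ 2 + b ^ 2 + 2 * x * (a * b) with B_def
  have hB_eq : ∀ x, B x = g x + (b + a * x) ^ 2 := fun x => by simp only [g_def, B_def]; ring
  have hB : ∀ x ∈ D, 0 < B x := fun x hx => by rw [hB_eq]; have := hg x hx; positivity
  have hg' : ∀ x, HasDerivAt g (-2 * a ^ 2 * x) x := fun x =>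
    ((((hasDerivAt_pow 2 x).const_sub 1).mul_const (a ^ 2)).const_add δ).congr_deriv
      (by norm_num; ring)
  have hB' : ∀ x, HasDerivAt B (2 * (a * b)) x := fun x =>
    ((((hasDerivAt_id x).const_mul 2).mul_const (a * b)).const_add
      (δ + a ^ 2 + b ^ 2)).congr_deriv (by ring)
  have hf' : ∀ x ∈ D, HasDerivAt (fun x => log (g x) - log (B x))
      (-2 * a ^ 2 * x / g x - 2 * (a * b) / B x) x := fun x hx =>
    ((hg' x).log (hg x hx).ne').sub ((hB' x).log (hB x hx).ne')
  have hf'' : ∀ x ∈ D, HasDerivAt (fun x => -2 * a ^ 2 * x / g x - 2 * (a * b) / B x)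
      (-(2 * a ^ 2 * g x + (2 * a ^ 2 * x) ^ 2) / g x ^ 2 + (2 * (a * b)) ^ 2 / B x ^ 2) x := by
    intro x hx
    have h₁ := ((hasDerivAt_id x).const_mul (-2 * a ^ 2)).div (hg' x) (hg x hx).ne'
    have h₂ := (hasDerivAt_const x (2 * (a * b))).div (hB' x) (hB x hx).ne'
    exact (h₁.sub h₂).congr_deriv (by simp only [id]; ring)
  have hf''_nonpos : ∀ x ∈ D,
      -(2 * a ^ 2 * g x + (2 * a ^ 2 * x) ^ 2) / g x ^ 2 + (2 * (a * b)) ^ 2 / B x ^ 2 ≤ 0 := by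
    intro x hx
    have hgx := hg x hx
    have key := mul_le_mul_of_nonneg_left (two_mul_sq_mul_sq_le hgx.le b (a * x))
      (by positivity : (0 : ℝ) ≤ 2 * a ^ 2)
    rw [← hB_eq] at key
    rw [neg_div, neg_add_nonpos_iff, div_le_div_iff₀ (pow_pos (hB x hx) 2) (pow_pos hgx 2)]
    linear_combination key
  exact concaveOn_of_hasDerivWithinAt2_nonpos hD
    (fun x hx => (hf' x hx).continuousAt.continuousWithinAt)
    (fun x hx => (hf' x (interior_subset hx)).hasDerivWithinAt)
    (fun x hx => (hf'' x (interior_subset hx)).hasDerivWithinAt)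
    (fun x hx => hf''_nonpos x (interior_subset hx))

/-- For every `δ ∈ [0,1]`, the function
`ρ ↦ (1/2) [log((1+P₂+P₁+Q+2ρ√(P₁Q))/(δ+P₁+Q+2ρ√(P₁Q))) + log((δ+(1−ρ²)P₁)/(1+P₂))]`
is concave on `[−1, 0]`. -/
theorem f_objective_concave (P₁ P₂ Q δ : ℝ)
    (hP₁ : 0 < P₁) (hP₂ : 0 < P₂) (hQ : 0 < Q)
    (hδ : δ ∈ Set.Icc (0 : ℝ) 1)
    (hpos1 : ∀ ρ ∈ Set.Icc (-1 : ℝ) 0, 0 < δ + P₁ + Q + 2 * ρ * Real.sqrt (P₁ * Q))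
    (hpos2 : ∀ ρ ∈ Set.Icc (-1 : ℝ) 0, 0 < δ + (1 - ρ ^ 2) * P₁) :
    ConcaveOn ℝ (Set.Icc (-1 : ℝ) 0)
      (fun ρ => (1 / 2) *
        (Real.log ((1 + P₂ + P₁ + Q + 2 * ρ * Real.sqrt (P₁ * Q))
            / (δ + P₁ + Q + 2 * ρ * Real.sqrt (P₁ * Q)))
          + Real.log ((δ + (1 - ρ ^ 2) * P₁) / (1 + P₂)))) := by
  have hnum : ∀ ρ ∈ Icc (-1 : ℝ) 0, 0 < 1 + P₂ + P₁ + Q + 2 * ρ * √(P₁ * Q) :=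
    fun ρ hρ => by linarith [hpos1 ρ hρ, hδ.2]
  have hlog_num : ConcaveOn ℝ (Icc (-1 : ℝ) 0)
      fun ρ => log (1 + P₂ + P₁ + Q + 2 * ρ * √(P₁ * Q)) :=
    ((concaveOn_const_add_mul (convex_Icc _ _) (1 + P₂ + P₁ + Q) (2 * √(P₁ * Q))).congr
      fun ρ _ => by ring).log hnum
  have hlog_ratio :=
    concaveOn_log_quadratic_sub_log_affine (convex_Icc (-1 : ℝ) 0) √P₁ √Q δ
      (by simpa only [sq_sqrt hP₁.le] using hpos2)
  simp only [sq_sqrt hP₁.le, sq_sqrt hQ.le, ← sqrt_mul hP₁.le] at hlog_ratio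
  refine (((hlog_num.add hlog_ratio).add_const (-log (1 + P₂))).smul
    (by norm_num : (0 : ℝ) ≤ 1 / 2)).congr fun ρ hρ => ?_
  rw [log_div (hnum ρ hρ).ne' (hpos1 ρ hρ).ne', log_div (hpos2 ρ hρ).ne' (by positivity)]
  simp only [Pi.add_apply, smul_eq_mul]
  ring
end

section
/- The function ρ ↦ (1/2)·log(1 + P₂/(1+P₁+Q+2ρ√(P₁Q))) + (1/2)·log(1+P₁(1−ρ²)) is continuous and concave on [−1,0], and hence attains a unique maximum on [−1,0]. -/
/-!
Write `P₁ = s²` and `Q = t²` with `s, t > 0`, so that `√(P₁Q) = st`. With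
`D = 1 + s² + t² + 2ρst` and `E = 1 + s²(1 - ρ²)`, both at least `1` for `|ρ| ≤ 1`, the objective is
`½ (log (D + P₂) + (log E - log D))`. The first logarithm is of a non-constant affine function of
`ρ`, hence strictly concave. The difference `log E - log D` has second derivative
`4s²t²/D² - 2s²(1 + s²(1 + ρ²))/E²`, which is nonpositive by the polynomial inequality
`2t²E² ≤ (1 + s²(1 + ρ²))D²`. So the objective is strictly concave on `[-1, 1]`, and a continuous
strictly concave function on a compact interval has exactly one maximiser.
-/

open Real Set

noncomputable def sumRate (P₁ P₂ Q ρ : ℝ) : ℝ :=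
  (1 / 2) * Real.log (1 + P₂ / (1 + P₁ + Q + 2 * ρ * Real.sqrt (P₁ * Q)))
    + (1 / 2) * Real.log (1 + P₁ * (1 - ρ ^ 2))

theorem StrictConcaveOn.const_mul {E : Type*} [AddCommMonoid E] [Module ℝ E] {s : Set E}
    {f : E → ℝ} {c : ℝ} (hc : 0 < c) (hf : StrictConcaveOn ℝ s f) :
    StrictConcaveOn ℝ s fun x => c * f x := by
  refine ⟨hf.1, fun x hx y hy hxy a b ha hb hab => ?_⟩
  have h := mul_lt_mul_of_pos_left (hf.2 hx hy hxy ha hb hab) hc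
  simp only [smul_eq_mul] at h ⊢
  linarith

theorem strictConcaveOn_log_affine {s : Set ℝ} {a b : ℝ} (hs : Convex ℝ s) (hb : b ≠ 0)
    (hpos : ∀ x ∈ s, 0 < a + b * x) : StrictConcaveOn ℝ s fun x => log (a + b * x) := by
  refine ⟨hs, fun x hx y hy hxy θ η hθ hη hθη => ?_⟩
  have h := strictConcaveOn_log_Ioi.2 (hpos x hx) (hpos y hy) (by simpa [hb] using hxy) hθ hη hθη
  simp only [smul_eq_mul] at h ⊢
  convert h using 2
  linear_combination (-a) * hθη

theorem one_add_sq_mul_one_sub_sq_pos (s : ℝ) {ρ : ℝ} (hρ : ρ ∈ Icc (-1 : ℝ) 1) :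
    0 < 1 + s ^ 2 * (1 - ρ ^ 2) := by
  have : ρ ^ 2 ≤ 1 := by nlinarith [hρ.1, hρ.2]
  nlinarith [sq_nonneg s]

theorem one_add_sq_add_sq_add_two_mul_mul_pos (s t : ℝ) {ρ : ℝ} (hρ : ρ ∈ Icc (-1 : ℝ) 1) :
    0 < 1 + s ^ 2 + t ^ 2 + 2 * ρ * (s * t) := by
  nlinarith [one_add_sq_mul_one_sub_sq_pos t hρ, sq_nonneg (s + ρ * t)]

theorem two_mul_sq_mul_sq_le_mul_sq (s t ρ : ℝ) (hE : 0 ≤ 1 + s ^ 2 * (1 - ρ ^ 2)) :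
    2 * t ^ 2 * (1 + s ^ 2 * (1 - ρ ^ 2)) ^ 2
      ≤ (1 + s ^ 2 * (1 + ρ ^ 2)) * (1 + s ^ 2 + t ^ 2 + 2 * ρ * (s * t)) ^ 2 := by
  -- with `E = 1 + s²(1 - ρ²)` and `u = t + ρs`, RHS - LHS = `E (E + 2ρsu)² + (1 + s²(1 + ρ²)) u⁴`
  nlinarith [mul_nonneg hE (sq_nonneg (1 + s ^ 2 * (1 - ρ ^ 2) + 2 * ρ * s * (t + ρ * s))),
    mul_nonneg (by positivity : (0:ℝ) ≤ 1 + s ^ 2 * (1 + ρ ^ 2))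
      (pow_nonneg (sq_nonneg (t + ρ * s)) 2)]

theorem hasDerivAt_one_add_sq_mul_one_sub_sq (s ρ : ℝ) :
    HasDerivAt (fun ρ => 1 + s ^ 2 * (1 - ρ ^ 2)) (-(2 * s ^ 2) * ρ) ρ := by
  refine ((((hasDerivAt_pow 2 ρ).const_sub 1).const_mul (s ^ 2)).const_add 1).congr_deriv ?_
  push_cast
  ring

theorem hasDerivAt_one_add_sq_add_sq_add_two_mul_mul (s t ρ : ℝ) :
    HasDerivAt (fun ρ => 1 + s ^ 2 + t ^ 2 + 2 * ρ * (s * t)) (2 * (s * t)) ρ := by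
  refine ((((hasDerivAt_id' ρ).const_mul 2).mul_const (s * t)).const_add
    (1 + s ^ 2 + t ^ 2)).congr_deriv (by ring)

theorem concaveOn_log_sub_log (s t : ℝ) :
    ConcaveOn ℝ (Icc (-1) 1) fun ρ =>
      log (1 + s ^ 2 * (1 - ρ ^ 2)) - log (1 + s ^ 2 + t ^ 2 + 2 * ρ * (s * t)) := by
  have hE (ρ : ℝ) (hρ : ρ ∈ Icc (-1 : ℝ) 1) := one_add_sq_mul_one_sub_sq_pos s hρ
  have hD (ρ : ℝ) (hρ : ρ ∈ Icc (-1 : ℝ) 1) := one_add_sq_add_sq_add_two_mul_mul_pos s t hρ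
  have hf' (ρ : ℝ) (hρ : ρ ∈ Icc (-1 : ℝ) 1) : HasDerivAt
      (fun ρ => log (1 + s ^ 2 * (1 - ρ ^ 2)) - log (1 + s ^ 2 + t ^ 2 + 2 * ρ * (s * t)))
      (-(2 * s ^ 2) * ρ / (1 + s ^ 2 * (1 - ρ ^ 2))
        - 2 * (s * t) / (1 + s ^ 2 + t ^ 2 + 2 * ρ * (s * t))) ρ :=
    ((hasDerivAt_one_add_sq_mul_one_sub_sq s ρ).log (hE ρ hρ).ne').sub
      ((hasDerivAt_one_add_sq_add_sq_add_two_mul_mul s t ρ).log (hD ρ hρ).ne')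
  have hf'' (ρ : ℝ) (hρ : ρ ∈ Icc (-1 : ℝ) 1) : HasDerivAt
      (fun ρ => -(2 * s ^ 2) * ρ / (1 + s ^ 2 * (1 - ρ ^ 2))
        - 2 * (s * t) / (1 + s ^ 2 + t ^ 2 + 2 * ρ * (s * t)))
      ((2 * (s * t)) ^ 2 / (1 + s ^ 2 + t ^ 2 + 2 * ρ * (s * t)) ^ 2
        - 2 * s ^ 2 * (1 + s ^ 2 * (1 + ρ ^ 2)) / (1 + s ^ 2 * (1 - ρ ^ 2)) ^ 2) ρ := by
    refine ((((hasDerivAt_id' ρ).const_mul (-(2 * s ^ 2))).div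
      (hasDerivAt_one_add_sq_mul_one_sub_sq s ρ) (hE ρ hρ).ne').sub
      ((hasDerivAt_const ρ (2 * (s * t))).div
        (hasDerivAt_one_add_sq_add_sq_add_two_mul_mul s t ρ) (hD ρ hρ).ne')).congr_deriv ?_
    field_simp
    ring
  refine concaveOn_of_hasDerivWithinAt2_nonpos (convex_Icc _ _)
    ((ContinuousOn.log (by fun_prop) fun ρ hρ => (hE ρ hρ).ne').sub
      (ContinuousOn.log (by fun_prop) fun ρ hρ => (hD ρ hρ).ne'))
    (fun ρ hρ => (hf' ρ (interior_subset hρ)).hasDerivWithinAt)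
    (fun ρ hρ => (hf'' ρ (interior_subset hρ)).hasDerivWithinAt) fun ρ hρ => ?_
  have hρ := interior_subset hρ
  have key := two_mul_sq_mul_sq_le_mul_sq s t ρ (hE ρ hρ).le
  rw [sub_nonpos, div_le_div_iff₀ (pow_pos (hD ρ hρ) 2) (pow_pos (hE ρ hρ) 2)]
  nlinarith [mul_le_mul_of_nonneg_left key (by positivity : (0 : ℝ) ≤ 2 * s ^ 2)]

theorem sumRate_sq_sq {s t p ρ : ℝ} (hs : 0 ≤ s) (ht : 0 ≤ t) (hp : 0 ≤ p)
    (hρ : ρ ∈ Icc (-1 : ℝ) 1) :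
    sumRate (s ^ 2) p (t ^ 2) ρ = 1 / 2 * (log (1 + s ^ 2 + t ^ 2 + p + 2 * (s * t) * ρ)
      + (log (1 + s ^ 2 * (1 - ρ ^ 2)) - log (1 + s ^ 2 + t ^ 2 + 2 * ρ * (s * t)))) := by
  have hD := one_add_sq_add_sq_add_two_mul_mul_pos s t hρ
  rw [sumRate, ← mul_pow, sqrt_sq (mul_nonneg hs ht), one_add_div hD.ne',
    log_div (add_pos_of_pos_of_nonneg hD hp).ne' hD.ne']
  ring_nf

theorem continuousOn_sumRate {P₁ P₂ Q : ℝ} (hP₁ : 0 ≤ P₁) (hP₂ : 0 ≤ P₂) (hQ : 0 ≤ Q) :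
    ContinuousOn (sumRate P₁ P₂ Q) (Icc (-1) 1) := by
  obtain ⟨s, hs, rfl⟩ : ∃ s, 0 ≤ s ∧ s ^ 2 = P₁ := ⟨√P₁, sqrt_nonneg _, sq_sqrt hP₁⟩
  obtain ⟨t, ht, rfl⟩ : ∃ t, 0 ≤ t ∧ t ^ 2 = Q := ⟨√Q, sqrt_nonneg _, sq_sqrt hQ⟩
  have hD (ρ : ℝ) (hρ : ρ ∈ Icc (-1 : ℝ) 1) := one_add_sq_add_sq_add_two_mul_mul_pos s t hρ
  refine ContinuousOn.congr ?_ fun ρ hρ => sumRate_sq_sq hs ht hP₂ hρ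
  refine continuousOn_const.mul ((ContinuousOn.log (by fun_prop) fun ρ hρ => ?_).add
    ((ContinuousOn.log (by fun_prop) fun ρ hρ => (one_add_sq_mul_one_sub_sq_pos s hρ).ne').sub
      (ContinuousOn.log (by fun_prop) fun ρ hρ => (hD ρ hρ).ne')))
  nlinarith [hD ρ hρ]

theorem strictConcaveOn_sumRate {P₁ P₂ Q : ℝ} (hP₁ : 0 < P₁) (hP₂ : 0 ≤ P₂) (hQ : 0 < Q) :
    StrictConcaveOn ℝ (Icc (-1) 1) (sumRate P₁ P₂ Q) := by
  obtain ⟨s, hs, rfl⟩ : ∃ s, 0 < s ∧ s ^ 2 = P₁ := ⟨√P₁, sqrt_pos.2 hP₁, sq_sqrt hP₁.le⟩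
  obtain ⟨t, ht, rfl⟩ : ∃ t, 0 < t ∧ t ^ 2 = Q := ⟨√Q, sqrt_pos.2 hQ, sq_sqrt hQ.le⟩
  have hlog : StrictConcaveOn ℝ (Icc (-1) 1) fun ρ =>
      log (1 + s ^ 2 + t ^ 2 + P₂ + 2 * (s * t) * ρ) :=
    strictConcaveOn_log_affine (convex_Icc _ _) (mul_pos two_pos (mul_pos hs ht)).ne'
      fun ρ hρ => by nlinarith [one_add_sq_add_sq_add_two_mul_mul_pos s t hρ]
  exact ((hlog.add_concaveOn (concaveOn_log_sub_log s t)).const_mul one_half_pos).congr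
    fun ρ hρ => (sumRate_sq_sq hs.le ht.le hP₂ hρ).symm

theorem StrictConcaveOn.existsUnique_isMaxOn {E : Type*} [TopologicalSpace E] [AddCommMonoid E]
    [Module ℝ E] {s : Set E} {f : E → ℝ} (hf : StrictConcaveOn ℝ s f) (hs : IsCompact s)
    (hne : s.Nonempty) (hc : ContinuousOn f s) : ∃! x, x ∈ s ∧ IsMaxOn f s x := by
  obtain ⟨x, hx, hmax⟩ := hs.exists_isMaxOn hne hc
  exact ⟨x, ⟨hx, hmax⟩, fun y ⟨hy, hymax⟩ => hf.eq_of_isMaxOn hymax hmax hy hx⟩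

/-- The function
`ρ ↦ (1/2) log(1 + P₂/(1+P₁+Q+2ρ√(P₁Q))) + (1/2) log(1+P₁(1−ρ²))`
is continuous and concave on `[−1,0]`, and attains a unique maximum on `[−1,0]`. -/
theorem sum_rate_objective_concave (P₁ P₂ Q : ℝ)
    (hP₁ : 0 < P₁) (hP₂ : 0 < P₂) (hQ : 0 < Q) :
    ContinuousOn
      (fun ρ => (1 / 2) * Real.log (1 + P₂ / (1 + P₁ + Q + 2 * ρ * Real.sqrt (P₁ * Q)))
        + (1 / 2) * Real.log (1 + P₁ * (1 - ρ ^ 2))) (Set.Icc (-1 : ℝ) 0) ∧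
    ConcaveOn ℝ (Set.Icc (-1 : ℝ) 0)
      (fun ρ => (1 / 2) * Real.log (1 + P₂ / (1 + P₁ + Q + 2 * ρ * Real.sqrt (P₁ * Q)))
        + (1 / 2) * Real.log (1 + P₁ * (1 - ρ ^ 2))) ∧
    ∃! ρ : ℝ, ρ ∈ Set.Icc (-1 : ℝ) 0 ∧
      IsMaxOn
        (fun ρ => (1 / 2) * Real.log (1 + P₂ / (1 + P₁ + Q + 2 * ρ * Real.sqrt (P₁ * Q)))
          + (1 / 2) * Real.log (1 + P₁ * (1 - ρ ^ 2))) (Set.Icc (-1 : ℝ) 0) ρ := by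
  have hsub : Icc (-1 : ℝ) 0 ⊆ Icc (-1) 1 := Icc_subset_Icc_right zero_le_one
  have hcont := (continuousOn_sumRate hP₁.le hP₂.le hQ.le).mono hsub
  have hconc := (strictConcaveOn_sumRate hP₁ hP₂.le hQ).subset hsub (convex_Icc _ _)
  exact ⟨hcont, hconc.concaveOn,
    hconc.existsUnique_isMaxOn isCompact_Icc (nonempty_Icc.2 (by norm_num)) hcont⟩
end
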